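/- arXiv:2003.10357 — 2 statements merged into one kernel-verified Lean document; each statement's English description precedes it below -/
import Mathlib

section
/- With the setup described in the context, for every y ∈ (Kˣ)^k the following are equivalent: (i) there exists t ∈ G such that (x(y)_i)^q = t_i·x(y)_i in K for all i ∈ {1,…,r}; (ii) every coordinate of y^{L2} lies in the image of F under the inclusion F ⊆ K. (Paper: Lemma 3.9 'repTQrat': a v-normalized representative defines an F_q-rational point of the torus T_Q if and only if its L2-power has all coordinates in F_q*.) -/
/-!
Write `u ^ M` (`zpowMat u M`) for the tuple `j ↦ ∏ i, u i ^ M i j`. Coordinatewise,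
`x(y)^q = t x(y)` forces `t = 1` on the last `r - N` coordinates and `t = y^(q-1)` on the `k`
middle ones and leaves the first `N - k` free, so (i) asks for some `u ∈ (Kˣ)^N` with
`u ^ A' = 1` whose last `k` coordinates are `y^(q-1)`. As `T` is unimodular, `u ^ A' = 1` iff
`u ^ H = 1`. Since `H` is lower triangular, the last `k` columns of `u ^ H` only involve those
last coordinates and equal `(y^(q-1)) ^ L2 = (y ^ L2)^(q-1)`; once they vanish, the other columns
are solved one at a time from right to left, because the diagonal of `H` is nonzero and `Kˣ` is
divisible. Finally a unit of `K` lies in `F` iff its `(q-1)`-th power is `1`.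
-/

def firstRows {r N : ℕ} (hNr : N ≤ r) (A : Matrix (Fin r) (Fin N) ℤ) :
    Matrix (Fin N) (Fin N) ℤ :=
  Matrix.of fun i j => A ⟨(i : ℕ), by have := i.isLt; omega⟩ j

def lowerRight {N k : ℕ} (hkN : k ≤ N) (H : Matrix (Fin N) (Fin N) ℤ) :
    Matrix (Fin k) (Fin k) ℤ :=
  Matrix.of fun i j =>
    H ⟨N - k + (i : ℕ), by have := i.isLt; omega⟩
      ⟨N - k + (j : ℕ), by have := j.isLt; omega⟩

def xvec {K : Type*} [Field K] {k N r : ℕ} (hkN : k ≤ N) (hNr : N ≤ r)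
    (y : Fin k → Kˣ) : Fin r → K :=
  fun i =>
    if h1 : (i : ℕ) < N - k then 0
    else if h2 : (i : ℕ) < N then (y ⟨(i : ℕ) - (N - k), by omega⟩ : K)
    else 1

open Finset Polynomial

section FiniteField

variable {F K : Type*} [Field F] [Fintype F] [Field K] [Algebra F K]

theorem mem_range_algebraMap_iff_pow_card_eq {z : K} :
    z ∈ Set.range (algebraMap F K) ↔ z ^ Fintype.card F = z := by
  refine ⟨by rintro ⟨a, rfl⟩; rw [← map_pow, FiniteField.pow_card], fun hz => ?_⟩
  have hroots := roots_map_of_injective_of_card_eq_natDegree (algebraMap F K).injective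
    (p := X ^ Fintype.card F - X) (by
      rw [FiniteField.roots_X_pow_card_sub_X,
        FiniteField.X_pow_card_sub_X_natDegree_eq F Fintype.one_lt_card]
      rfl)
  have hz_root : z ∈ (map (algebraMap F K) (X ^ Fintype.card F - X)).roots := by
    rw [mem_roots (map_ne_zero (FiniteField.X_pow_card_sub_X_ne_zero F Fintype.one_lt_card))]
    simp [hz]
  rw [← hroots, FiniteField.roots_X_pow_card_sub_X] at hz_root
  simpa using hz_root

theorem Units.val_mem_range_algebraMap_iff_pow_card_sub_one_eq_one {z : Kˣ} :
    (z : K) ∈ Set.range (algebraMap F K) ↔ z ^ (Fintype.card F - 1) = 1 := by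
  rw [mem_range_algebraMap_iff_pow_card_eq, ← Units.val_pow_eq_pow_val, Units.val_inj]
  conv_lhs => rw [← Nat.sub_add_cancel (Fintype.card_pos (α := F)), pow_succ]
  exact mul_eq_right

end FiniteField

theorem Units.val_pow_eq_mul_self_iff {K : Type*} [Field K] {z t : Kˣ} {q : ℕ} (hq : 0 < q) :
    (z : K) ^ q = t * z ↔ t = z ^ (q - 1) := by
  rw [← Units.val_pow_eq_pow_val, ← Units.val_mul, Units.val_inj]
  conv_lhs => rw [← Nat.sub_add_cancel hq, pow_succ]
  rw [_root_.mul_left_inj, eq_comm]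

theorem IsAlgClosed.units_zpow_surjective {K : Type*} [Field K] [IsAlgClosed K] {d : ℤ}
    (hd : d ≠ 0) : Function.Surjective fun b : Kˣ => b ^ d := by
  have hpow : ∀ (n : ℕ), n ≠ 0 → ∀ c : Kˣ, ∃ b : Kˣ, b ^ n = c := fun n hn c => by
    obtain ⟨z, hz⟩ := IsAlgClosed.exists_pow_nat_eq (c : K) (Nat.pos_of_ne_zero hn)
    have hz0 : z ≠ 0 := by rintro rfl; exact c.ne_zero (by rw [← hz, zero_pow hn])
    exact ⟨Units.mk0 z hz0, Units.ext (by simpa using hz)⟩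
  intro a
  obtain ⟨n, rfl | rfl⟩ := Int.eq_nat_or_neg d
  · obtain ⟨b, hb⟩ := hpow n (by exact_mod_cast hd) a
    exact ⟨b, by simpa using hb⟩
  · obtain ⟨b, hb⟩ := hpow n (by simpa using hd) a⁻¹
    exact ⟨b, by simp [hb]⟩

section MonomialMap

variable {G : Type*} [CommGroup G] {ι κ μ : Type*} [Fintype ι]

theorem zpow_finset_sum (a : G) (s : Finset κ) (f : κ → ℤ) :
    a ^ (∑ i ∈ s, f i) = ∏ i ∈ s, a ^ f i := by
  induction s using Finset.cons_induction with
  | empty => simp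
  | cons i s _ ih => rw [sum_cons, prod_cons, zpow_add, ih]

def zpowMat (u : ι → G) (M : Matrix ι κ ℤ) : κ → G := fun j => ∏ i, u i ^ M i j

@[simp]
theorem zpowMat_apply (u : ι → G) (M : Matrix ι κ ℤ) (j : κ) :
    zpowMat u M j = ∏ i, u i ^ M i j := rfl

@[simp]
theorem one_zpowMat (M : Matrix ι κ ℤ) : zpowMat (1 : ι → G) M = 1 := by
  ext j; simp

theorem zpowMat_mul [Fintype κ] (u : ι → G) (M : Matrix ι κ ℤ) (M' : Matrix κ μ ℤ) :
    zpowMat u (M * M') = zpowMat (zpowMat u M) M' := by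
  ext j
  simp only [zpowMat_apply, Matrix.mul_apply, zpow_finset_sum, ← prod_zpow, zpow_mul]
  exact prod_comm

theorem zpowMat_mul_eq_one_iff [Fintype κ] [DecidableEq κ] {u : ι → G} {M : Matrix ι κ ℤ}
    {T : Matrix κ κ ℤ} (hT : IsUnit T.det) : zpowMat u (M * T) = 1 ↔ zpowMat u M = 1 := by
  refine ⟨fun h => ?_, fun h => by rw [zpowMat_mul, h, one_zpowMat]⟩
  rw [← Matrix.mul_one M, ← Matrix.mul_nonsing_inv T hT, ← Matrix.mul_assoc, zpowMat_mul, h,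
    one_zpowMat]

theorem zpowMat_pow_left (u : ι → G) (M : Matrix ι κ ℤ) (n : ℕ) :
    zpowMat (fun i => u i ^ n) M = zpowMat u M ^ n := by
  ext j
  rw [Pi.pow_apply, zpowMat_apply, zpowMat_apply, ← prod_pow]
  refine prod_congr rfl fun i _ => ?_
  rw [← zpow_natCast, ← zpow_natCast, ← zpow_mul, ← zpow_mul, mul_comm]

theorem zpowMat_update_mul [DecidableEq ι] (u : ι → G) (M : Matrix ι κ ℤ) (i : ι) (b : G)
    (j : κ) :
    zpowMat (Function.update u i b) M j * u i ^ M i j = zpowMat u M j * b ^ M i j := by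
  simp only [zpowMat_apply, ← mul_prod_erase univ _ (mem_univ i), Function.update_self]
  rw [prod_congr rfl fun l hl => by rw [Function.update_of_ne (ne_of_mem_erase hl)]]
  ac_rfl

end MonomialMap

section LowerTriangular

variable {G : Type*} [CommGroup G]

theorem exists_zpowMat_eq_one_of_isLowerTriangular
    (hroot : ∀ d : ℤ, d ≠ 0 → Function.Surjective fun b : G => b ^ d) {n : ℕ}
    {H : Matrix (Fin n) (Fin n) ℤ} (hH : H.IsLowerTriangular) (hdiag : ∀ i, H i i ≠ 0)
    (m : ℕ) (v : Fin n → G) (hv : ∀ j : Fin n, m ≤ j → zpowMat v H j = 1) :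
    ∃ u : Fin n → G, (∀ i : Fin n, m ≤ i → u i = v i) ∧ zpowMat u H = 1 := by
  induction m generalizing v with
  | zero => exact ⟨v, fun _ _ => rfl, funext fun j => hv j (Nat.zero_le _)⟩
  | succ m ih =>
    rcases le_or_gt n m with hm | hm
    · obtain ⟨u, hu, hu1⟩ := ih v fun j hj => absurd j.isLt (by omega)
      exact ⟨u, fun i hi => hu i (by omega), hu1⟩
    set i₀ : Fin n := ⟨m, hm⟩
    -- Back substitution: the new value at `i₀` solves column `i₀`, and by triangularity the
    -- later columns do not involve coordinate `i₀`.
    obtain ⟨b, hb⟩ : ∃ b : G, b ^ H i₀ i₀ = v i₀ ^ H i₀ i₀ / zpowMat v H i₀ :=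
      hroot _ (hdiag i₀) _
    have hcol := zpowMat_update_mul v H i₀ b
    obtain ⟨u, hu, hu1⟩ := ih (Function.update v i₀ b) fun j hj => by
      rcases (show (j : ℕ) = m ∨ m + 1 ≤ j by omega) with hjm | hjm
      · rw [show j = i₀ from Fin.ext hjm]
        have := hcol i₀
        rwa [hb, mul_div_cancel, mul_eq_right] at this
      · have hzero : H i₀ j = 0 := hH (show i₀ < j from hjm)
        simpa only [hzero, zpow_zero, mul_one, hv j hjm] using hcol j
    refine ⟨u, fun i hi => ?_, hu1⟩
    rw [hu i (by omega), Function.update_of_ne (show i₀ < i from hi).ne']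

variable {k N : ℕ} (hkN : k ≤ N)

def bottomIdx (a : Fin k) : Fin N := ⟨N - k + a, by omega⟩

theorem bottomIdx_injective : Function.Injective (bottomIdx hkN) := fun a b h => by
  have := congrArg Fin.val h
  simp only [bottomIdx] at this
  exact Fin.ext (by omega)

theorem exists_bottomIdx_eq {j : Fin N} (hj : N - k ≤ j) : ∃ a, bottomIdx hkN a = j :=
  ⟨⟨j - (N - k), by omega⟩, Fin.ext (by simp only [bottomIdx]; omega)⟩

theorem zpowMat_bottomIdx {H : Matrix (Fin N) (Fin N) ℤ} (hH : H.IsLowerTriangular)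
    (u : Fin N → G) (j : Fin k) :
    zpowMat u H (bottomIdx hkN j) = zpowMat (u ∘ bottomIdx hkN) (lowerRight hkN H) j := by
  refine (Fintype.prod_of_injective _ (bottomIdx_injective hkN) _ _ (fun i hi => ?_)
    fun a => rfl).symm
  have hi : (i : ℕ) < N - k := by
    by_contra h
    exact hi (exists_bottomIdx_eq hkN (by omega))
  have hlt : i < bottomIdx hkN j := by
    rw [Fin.lt_def]
    simp only [bottomIdx]
    omega
  rw [@hH i (bottomIdx hkN j) hlt, zpow_zero]

theorem exists_zpowMat_eq_one_comp_bottomIdx_iff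
    (hroot : ∀ d : ℤ, d ≠ 0 → Function.Surjective fun b : G => b ^ d)
    {H : Matrix (Fin N) (Fin N) ℤ} (hH : H.IsLowerTriangular) (hdiag : ∀ i, H i i ≠ 0)
    (w : Fin k → G) :
    (∃ u : Fin N → G, zpowMat u H = 1 ∧ u ∘ bottomIdx hkN = w) ↔
      zpowMat w (lowerRight hkN H) = 1 := by
  constructor
  · rintro ⟨u, hu, rfl⟩
    ext j
    rw [← zpowMat_bottomIdx hkN hH, hu]
    rfl
  · intro hw
    set v := Function.extend (bottomIdx hkN) w 1
    have hvw : v ∘ bottomIdx hkN = w :=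
      funext fun a => (bottomIdx_injective hkN).extend_apply w 1 a
    obtain ⟨u, hu, hu1⟩ := exists_zpowMat_eq_one_of_isLowerTriangular hroot hH hdiag (N - k) v
      fun j hj => by
        obtain ⟨a, rfl⟩ := exists_bottomIdx_eq hkN hj
        rw [zpowMat_bottomIdx hkN hH, hvw, hw]
        rfl
    refine ⟨u, hu1, funext fun a => ?_⟩
    rw [Function.comp_apply, hu _ (by simp [bottomIdx]), ← hvw]
    rfl

end LowerTriangular

theorem zpowMat_firstRows {G : Type*} [CommGroup G] {r N : ℕ} (hNr : N ≤ r)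
    (A : Matrix (Fin r) (Fin N) ℤ) (t : Fin r → G) (ht : ∀ i : Fin r, N ≤ i → t i = 1) :
    zpowMat t A = zpowMat (t ∘ Fin.castLE hNr) (firstRows hNr A) := by
  ext j
  refine (Fintype.prod_of_injective _ (Fin.castLE_injective hNr) _ _ (fun i hi => ?_)
    fun a => rfl).symm
  rw [ht i (not_lt.1 fun h => hi ⟨⟨i, h⟩, rfl⟩), one_zpow]

section Representative

variable {K : Type*} [Field K] {k N r : ℕ} (hkN : k ≤ N) (hNr : N ≤ r) (y : Fin k → Kˣ)

theorem xvec_of_lt {i : Fin r} (hi : (i : ℕ) < N - k) : xvec hkN hNr y i = 0 := dif_pos hi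

theorem xvec_castLE_bottomIdx (a : Fin k) :
    xvec hkN hNr y (Fin.castLE hNr (bottomIdx hkN a)) = y a := by
  have hlow : ¬N - k + (a : ℕ) < N - k := by omega
  have hmid : N - k + (a : ℕ) < N := by omega
  simp [xvec, bottomIdx, hlow, hmid]

theorem xvec_of_le {i : Fin r} (hi : N ≤ i) : xvec hkN hNr y i = 1 := by
  simp only [xvec]
  rw [dif_neg (by omega), dif_neg (by omega)]

theorem xvec_pow_eq_mul_iff {q : ℕ} (hq : 0 < q) (t : Fin r → Kˣ) :
    (∀ i, xvec hkN hNr y i ^ q = t i * xvec hkN hNr y i) ↔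
      (∀ a, t (Fin.castLE hNr (bottomIdx hkN a)) = y a ^ (q - 1)) ∧
        ∀ i : Fin r, N ≤ i → t i = 1 := by
  refine ⟨fun h => ⟨fun a => ?_, fun i hi => ?_⟩, fun ⟨hbottom, htop⟩ i => ?_⟩
  · have := h (Fin.castLE hNr (bottomIdx hkN a))
    rwa [xvec_castLE_bottomIdx, Units.val_pow_eq_mul_self_iff hq] at this
  · have := h i
    rwa [xvec_of_le hkN hNr y hi, ← Units.val_one, Units.val_pow_eq_mul_self_iff hq,
      one_pow] at this
  · rcases lt_or_ge (i : ℕ) (N - k) with hlow | hlow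
    · rw [xvec_of_lt hkN hNr y hlow, zero_pow hq.ne', mul_zero]
    rcases lt_or_ge (i : ℕ) N with hmid | hmid
    · obtain ⟨a, ha⟩ := exists_bottomIdx_eq hkN (j := ⟨i, hmid⟩) hlow
      obtain rfl : Fin.castLE hNr (bottomIdx hkN a) = i := by rw [ha]; rfl
      rw [xvec_castLE_bottomIdx, (Units.val_pow_eq_mul_self_iff hq).2 (hbottom a)]
    · rw [xvec_of_le hkN hNr y hmid, htop i hmid, one_pow, Units.val_one, one_mul]

theorem exists_zpowMat_eq_one_xvec_iff {q : ℕ} (hq : 0 < q) (A : Matrix (Fin r) (Fin N) ℤ) :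
    (∃ t : Fin r → Kˣ, zpowMat t A = 1 ∧ ∀ i, xvec hkN hNr y i ^ q = t i * xvec hkN hNr y i) ↔
      ∃ u : Fin N → Kˣ, zpowMat u (firstRows hNr A) = 1 ∧
        u ∘ bottomIdx hkN = fun a => y a ^ (q - 1) := by
  simp_rw [xvec_pow_eq_mul_iff hkN hNr y hq]
  constructor
  · rintro ⟨t, hA, hbottom, htop⟩
    exact ⟨t ∘ Fin.castLE hNr, by rwa [← zpowMat_firstRows hNr A t htop], funext hbottom⟩
  · rintro ⟨u, hA, hbottom⟩
    set t := Function.extend (Fin.castLE hNr) u 1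
    have htu : t ∘ Fin.castLE hNr = u :=
      funext fun i => (Fin.castLE_injective hNr).extend_apply u 1 i
    have htop : ∀ i : Fin r, N ≤ i → t i = 1 := fun i hi =>
      Function.extend_apply' _ _ _ fun ⟨a, ha⟩ => by
        rw [← ha, Fin.val_castLE] at hi
        exact absurd a.isLt (not_lt.2 hi)
    exact ⟨t, by rwa [zpowMat_firstRows hNr A t htop, htu],
      fun a => (congrFun htu _).trans (congrFun hbottom a), htop⟩

end Representative

theorem stmt_5_general {F K : Type*} [Field F] [Fintype F] [Field K] [Algebra F K]
    [IsAlgClosure F K] {k N r : ℕ}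
    (hkN : k ≤ N) (hNr : N ≤ r)
    (A : Matrix (Fin r) (Fin N) ℤ)
    (T : Matrix (Fin N) (Fin N) ℤ) (hT : IsUnit T.det)
    (hlow : ∀ i j : Fin N, (i : ℕ) < (j : ℕ) → (firstRows hNr A * T) i j = 0)
    (hdet : (firstRows hNr A).det ≠ 0)
    (y : Fin k → Kˣ) :
    (∃ t : Fin r → Kˣ,
        (∀ j : Fin N, ∏ i : Fin r, t i ^ A i j = 1) ∧
        (∀ i : Fin r,
          (xvec hkN hNr y i) ^ Fintype.card F = (t i : K) * xvec hkN hNr y i))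
      ↔ ∀ j : Fin k,
          ((∏ i : Fin k, y i ^ lowerRight hkN (firstRows hNr A * T) i j : Kˣ) : K)
            ∈ Set.range (algebraMap F K) := by
  have : IsAlgClosed K := IsAlgClosure.isAlgClosed F
  set H := firstRows hNr A * T
  have hH : H.IsLowerTriangular := fun i j h => hlow i j h
  have hdiag : ∀ i, H i i ≠ 0 := by
    have hdetH : H.det ≠ 0 := by rw [Matrix.det_mul]; exact mul_ne_zero hdet hT.ne_zero
    rw [Matrix.det_of_isLowerTriangular H hH] at hdetH
    exact fun i => prod_ne_zero_iff.1 hdetH i (mem_univ i)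
  calc _ ↔ ∃ t : Fin r → Kˣ, zpowMat t A = 1 ∧
          ∀ i, xvec hkN hNr y i ^ Fintype.card F = t i * xvec hkN hNr y i := by
        simp only [funext_iff, zpowMat_apply, Pi.one_apply]
    _ ↔ ∃ u : Fin N → Kˣ, zpowMat u H = 1 ∧
          u ∘ bottomIdx hkN = fun a => y a ^ (Fintype.card F - 1) := by
        simp only [exists_zpowMat_eq_one_xvec_iff hkN hNr y Fintype.card_pos, H,
          zpowMat_mul_eq_one_iff hT]
    _ ↔ zpowMat (fun a => y a ^ (Fintype.card F - 1)) (lowerRight hkN H) = 1 :=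
        exists_zpowMat_eq_one_comp_bottomIdx_iff hkN
          (fun _ hd => IsAlgClosed.units_zpow_surjective hd) hH hdiag _
    _ ↔ _ := by
        simp only [zpowMat_pow_left, funext_iff, Pi.pow_apply, Pi.one_apply, zpowMat_apply,
          Units.val_mem_range_algebraMap_iff_pow_card_sub_one_eq_one, H]

/-- Lemma 3.9 'repTQrat': the `v`-normalized tuple `x(y)`
represents an `F_q`-rational point (i.e. `x(y)^q = t · x(y)` for some `t ∈ G`)
iff every coordinate of `y^{L2}` lies in the image of `F` in `K`. -/
theorem stmt_5 {F K : Type*} [Field F] [Fintype F] [Field K] [Algebra F K]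
    [IsAlgClosure F K] {k N r : ℕ}
    (hk : 0 < k) (hkN : k ≤ N) (hNr : N ≤ r)
    (A : Matrix (Fin r) (Fin N) ℤ)
    (T : Matrix (Fin N) (Fin N) ℤ) (hT : IsUnit T.det)
    (hlow : ∀ i j : Fin N, (i : ℕ) < (j : ℕ) → (firstRows hNr A * T) i j = 0)
    (hdet : (firstRows hNr A).det ≠ 0)
    (hchar : ∀ p : ℕ, 0 < p → CharP K p → ¬ ((p : ℤ) ∣ (firstRows hNr A).det))
    (y : Fin k → Kˣ) :
    (∃ t : Fin r → Kˣ,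
        (∀ j : Fin N, ∏ i : Fin r, t i ^ A i j = 1) ∧
        (∀ i : Fin r,
          (xvec hkN hNr y i) ^ Fintype.card F = (t i : K) * xvec hkN hNr y i))
      ↔ ∀ j : Fin k,
          ((∏ i : Fin k, y i ^ lowerRight hkN (firstRows hNr A * T) i j : Kˣ) : K)
            ∈ Set.range (algebraMap F K) :=
  stmt_5_general hkN hNr A T hT hlow hdet y
end

section
/- With the setup described in the context, suppose moreover that v, m ∈ ℤ^N and a ∈ ℤ^r satisfy: ⟨v,u_i⟩ + a_i = 0 for i = 1,…,N; ⟨m,u_i⟩ + a_i = 0 for i = 1,…,N−k; and ⟨m,u_i⟩ + a_i ≥ 0 for all i = 1,…,r. Let m̃ ∈ ℤ^k be the vector of the last k coordinates of the row vector (m−v)·(Tᵀ)⁻¹ (whose first N−k coordinates vanish). Then for every y ∈ (Kˣ)^k, ∏_{i=1}^r (x(y)_i)^{⟨m,u_i⟩+a_i} = ∏_{j=1}^k ((y^{L2})_j)^{m̃_j}, where the left-hand side is computed in K (with 0^0 = 1) and the right-hand side uses integer powers in Kˣ. (Paper: Proposition 3.15 'propRM'.) -/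
/-!
Write `e_i = ⟨m, u_i⟩ + a_i` and `w = (m - v)(Tᵀ)⁻¹`, so that `m - v = T w`. For `i ≤ N` the
normalization `⟨v, u_i⟩ + a_i = 0` gives `e_i = ⟨m - v, u_i⟩ = (H w)_i` with `H = A'T`.
Since `H` is lower triangular with nonzero diagonal (its determinant is `det A' · det T ≠ 0`),
forward substitution in `(H w)_i = e_i = 0` for `i ≤ N - k` kills the first `N - k` coordinates
of `w`, so the last `k` entries of `H w` are `L₂ m̃`. On the other side, the factors of
`∏ x_i ^ e_i` with `i ≤ N - k` are `0 ^ 0 = 1` and those with `i > N` are `1`, leaving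
`∏_j y_j ^ (L₂ m̃)_j`, which is the right-hand side regrouped.
-/

open scoped Matrix

theorem Finset.prod_zpow_eq_zpow_sum {G ι : Type*} [CommGroup G] (s : Finset ι) (f : ι → ℤ)
    (g : G) : ∏ i ∈ s, g ^ f i = g ^ (∑ i ∈ s, f i) := by
  induction s using Finset.cons_induction with
  | empty => simp
  | cons a s ha ih => rw [Finset.sum_cons, Finset.prod_cons, zpow_add, ih]

theorem prod_prod_zpow_eq_prod_zpow_mulVec {G ι κ : Type*} [CommGroup G] [Fintype ι]
    [Fintype κ] (y : ι → G) (L : Matrix ι κ ℤ) (c : κ → ℤ) :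
    ∏ j, (∏ i, y i ^ L i j) ^ c j = ∏ i, y i ^ (L *ᵥ c) i := by
  simp only [← Finset.prod_zpow, ← zpow_mul, Matrix.mulVec, dotProduct,
    ← Finset.prod_zpow_eq_zpow_sum]
  exact Finset.prod_comm

@[to_additive]
theorem Fin.prod_univ_eq_prod_block {M : Type*} [CommMonoid M] {r : ℕ} (s n : ℕ)
    (hsn : s + n ≤ r) (f : Fin r → M) (hf : ∀ i : Fin r, (i : ℕ) < s ∨ s + n ≤ i → f i = 1) :
    ∏ i, f i = ∏ j : Fin n, f ⟨s + j, by omega⟩ := by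
  refine (Fintype.prod_of_injective (fun j : Fin n => (⟨s + j, by omega⟩ : Fin r))
    (fun a b hab => Fin.ext (by simpa using hab)) _ _ (fun i hi => hf i ?_) fun _ => rfl).symm
  by_contra! hmid
  exact hi ⟨⟨i - s, by omega⟩, Fin.ext (by simp only; omega)⟩

namespace Matrix.IsLowerTriangular

theorem diag_ne_zero {ι R : Type*} [Fintype ι] [LinearOrder ι] [CommRing R]
    {H : Matrix ι ι R} (hH : H.IsLowerTriangular) (hdet : H.det ≠ 0) (i : ι) : H i i ≠ 0 :=
  fun hi => hdet <| (det_of_isLowerTriangular H hH).trans (Finset.prod_eq_zero (by simp) hi)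

theorem eq_zero_of_mulVec_eq_zero {ι R : Type*} [Fintype ι] [LinearOrder ι] [WellFoundedLT ι]
    [Semiring R] [NoZeroDivisors R] {H : Matrix ι ι R} (hH : H.IsLowerTriangular)
    (hdiag : ∀ i, H i i ≠ 0) {w : ι → R} (l : ι) (hw : ∀ i ≤ l, (H *ᵥ w) i = 0) : w l = 0 := by
  induction l using WellFoundedLT.induction with
  | _ l ih =>
  have hrow : (H *ᵥ w) l = H l l * w l := by
    refine Finset.sum_eq_single l (fun j _ hjl => ?_) (by simp)
    rcases hjl.lt_or_gt with hj | hj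
    · exact mul_eq_zero_of_right _ (ih j hj fun i hi => hw i (hi.trans hj.le))
    · exact mul_eq_zero_of_left (hH (OrderDual.toDual_lt_toDual.mpr hj)) _
  exact (mul_eq_zero.mp (hrow ▸ hw l le_rfl)).resolve_left (hdiag l)

end Matrix.IsLowerTriangular

theorem lowerRight_mulVec {N k : ℕ} (hkN : k ≤ N) (H : Matrix (Fin N) (Fin N) ℤ)
    (w : Fin N → ℤ) (hw : ∀ l : Fin N, (l : ℕ) < N - k → w l = 0) (i : Fin k) :
    (lowerRight hkN H *ᵥ fun j => w ⟨N - k + j, by omega⟩) i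
      = (H *ᵥ w) ⟨N - k + i, by omega⟩ := by
  refine (Fin.sum_univ_eq_sum_block (N - k) k (by omega)
    (fun l => H ⟨N - k + i, by omega⟩ l * w l) ?_).symm
  rintro l (hl | hl)
  · simp [hw l hl]
  · omega

theorem prod_xvec_pow {K : Type*} [Field K] {k N r : ℕ} (hkN : k ≤ N) (hNr : N ≤ r)
    (y : Fin k → Kˣ) (e : Fin r → ℤ) (he₀ : ∀ i : Fin r, (i : ℕ) < N - k → e i = 0)
    (he : ∀ i, 0 ≤ e i) :
    ∏ i, xvec hkN hNr y i ^ (e i).toNat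
      = ((∏ j : Fin k, y j ^ e ⟨N - k + j, by omega⟩ : Kˣ) : K) := by
  rw [Fin.prod_univ_eq_prod_block (N - k) k (by omega), Units.coe_prod]
  · refine Finset.prod_congr rfl fun j _ => ?_
    rw [Units.val_zpow_eq_zpow_val, ← zpow_natCast, Int.toNat_of_nonneg (he _)]
    simp [xvec, show N - k + (j : ℕ) < N by omega]
  · rintro i (hi | hi)
    · simp [xvec, hi, he₀ i hi]
    · simp [xvec, show ¬ (i : ℕ) < N - k by omega, show ¬ (i : ℕ) < N by omega]

theorem Matrix.mulVec_vecMul_transpose_inv {n R : Type*} [Fintype n] [DecidableEq n] [CommRing R]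
    {T : Matrix n n R} (hT : IsUnit T.det) (x : n → R) : T *ᵥ (x ᵥ* T.transpose⁻¹) = x := by
  rw [← Matrix.vecMul_transpose, Matrix.vecMul_vecMul,
    Matrix.nonsing_inv_mul _ (by rwa [Matrix.det_transpose]), Matrix.vecMul_one]

theorem sum_mul_add_eq_firstRows_mul_mulVec {r N : ℕ} (hNr : N ≤ r) (A : Matrix (Fin r) (Fin N) ℤ)
    (T : Matrix (Fin N) (Fin N) ℤ) (hT : IsUnit T.det) (v m : Fin N → ℤ) (a : Fin r → ℤ)
    (hv : ∀ i : Fin r, (i : ℕ) < N → (∑ j : Fin N, v j * A i j) + a i = 0) (i : Fin N) :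
    (∑ j : Fin N, m j * A (Fin.castLE hNr i) j) + a (Fin.castLE hNr i)
      = ((firstRows hNr A * T) *ᵥ Matrix.vecMul (m - v) T.transpose⁻¹) i := by
  rw [← Matrix.mulVec_mulVec, Matrix.mulVec_vecMul_transpose_inv hT]
  have hvi := hv (Fin.castLE hNr i) i.isLt
  simp only [Matrix.mulVec, dotProduct, firstRows, Matrix.of_apply, Pi.sub_apply, mul_sub,
    Finset.sum_sub_distrib]
  simp only [Fin.castLE, mul_comm (A _ _)] at hvi ⊢
  linarith

/-- Proposition 3.15 'propRM': the evaluation of the monomial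
`χ^{⟨m,P⟩}` at the `v`-normalized tuple `x(y)` equals
`∏_j ((y^{L2})_j)^{m̃_j}`, where `m̃` is the vector of the last `k` coordinates
of the row vector `(m-v)·(Tᵀ)⁻¹`. -/
theorem stmt_8 {K : Type*} [Field K] {k N r : ℕ}
    (hkN : k ≤ N) (hNr : N ≤ r)
    (A : Matrix (Fin r) (Fin N) ℤ)
    (T : Matrix (Fin N) (Fin N) ℤ) (hT : IsUnit T.det)
    (hlow : ∀ i j : Fin N, (i : ℕ) < (j : ℕ) → (firstRows hNr A * T) i j = 0)
    (hdet : (firstRows hNr A).det ≠ 0)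
    (v m : Fin N → ℤ) (a : Fin r → ℤ)
    (hv : ∀ i : Fin r, (i : ℕ) < N → (∑ j : Fin N, v j * A i j) + a i = 0)
    (hm0 : ∀ i : Fin r, (i : ℕ) < N - k → (∑ j : Fin N, m j * A i j) + a i = 0)
    (hm : ∀ i : Fin r, 0 ≤ (∑ j : Fin N, m j * A i j) + a i)
    (y : Fin k → Kˣ) :
    ∏ i : Fin r, (xvec hkN hNr y i) ^ ((∑ j : Fin N, m j * A i j) + a i).toNat
      = ((∏ j : Fin k,
            (∏ i : Fin k, y i ^ lowerRight hkN (firstRows hNr A * T) i j)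
              ^ (Matrix.vecMul (m - v) (T.transpose)⁻¹
                  ⟨N - k + (j : ℕ), by have := j.isLt; omega⟩) : Kˣ) : K) := by
  set H := firstRows hNr A * T
  set w := Matrix.vecMul (m - v) T.transpose⁻¹
  have hexp := sum_mul_add_eq_firstRows_mul_mulVec hNr A T hT v m a hv
  have hH : H.IsLowerTriangular := fun i j hij => hlow i j hij
  have hdiag := hH.diag_ne_zero (by simpa [H, Matrix.det_mul] using ⟨hdet, hT.ne_zero⟩)
  have hw (l : Fin N) (hl : (l : ℕ) < N - k) : w l = 0 :=
    hH.eq_zero_of_mulVec_eq_zero hdiag l fun i hi =>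
      (hexp i).symm.trans (hm0 _ (lt_of_le_of_lt hi hl))
  refine (prod_xvec_pow hkN hNr y _ hm0 hm).trans ?_
  rw [prod_prod_zpow_eq_prod_zpow_mulVec y _ fun j : Fin k => w ⟨N - k + j, by omega⟩]
  refine congrArg _ (Finset.prod_congr rfl fun i _ => ?_)
  rw [lowerRight_mulVec hkN H w hw, ← hexp]
  rfl
end
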